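/- Fix integers q_1, q_0 ≥ 4 with q = q_1 + q_0 and let B(q_1,q_0) = 2^{−(q_1∧q_0)} + 2^{−((q_1∨q_0)+1)} − 2^{−q}. If B(q_1,q_0) ≤ α for some α ∈ (0,1), then for the comparison-of-means statistic T and independent X_k ~ N(μ, σ_k²), the critical value T^{(|𝔊|−1)}(X,𝔊) yields a test of level α: sup over μ ∈ ℝ and σ_1,...,σ_q > 0 of P(T(X) > T^{(|𝔊|−1)}(X,𝔊)) ≤ α. In particular, if q_1 ∧ q_0 ≥ 5 one can test at level α = 0.05, since B(q_1,q_0) ≤ 2^{−5} + 2^{−6} < 0.05. -/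

import Mathlib

open MeasureTheory ProbabilityTheory Finset Filter
open scoped NNReal ENNReal

noncomputable section

/-- Comparison-of-means statistic. -/
def Tstat (q1 q0 : ℕ) (x : Fin (q1 + q0) → ℝ) : ℝ :=
  (∑ k : Fin (q1 + q0), if (k : ℕ) < q1 then x k else 0) / q1
    - (∑ k : Fin (q1 + q0), if q1 ≤ (k : ℕ) then x k else 0) / q0

/-- The set 𝔊 of block-monotone permutations. -/
def permSet (q1 q0 : ℕ) : Finset (Equiv.Perm (Fin (q1 + q0))) :=
  Finset.univ.filter fun g =>
    ∀ i j : Fin (q1 + q0), i < j → ((j : ℕ) < q1 ∨ q1 ≤ (i : ℕ)) → g i < g j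

theorem permSet_nonempty (q1 q0 : ℕ) : (permSet q1 q0).Nonempty :=
  ⟨1, Finset.mem_filter.mpr ⟨Finset.mem_univ _, fun i j hij _ => by simpa using hij⟩⟩

/-- The sorted (ascending) list of permutation values `T(gx)`, `g ∈ 𝔊`. -/
def permVals (q1 q0 : ℕ) (x : Fin (q1 + q0) → ℝ) : List ℝ :=
  ((permSet q1 q0).val.map fun g => Tstat q1 q0 fun k => x (g k)).sort (· ≤ ·)

/-- `ordStat q1 q0 x j = T^{(j)}(x, 𝔊)`, the `j`-th smallest permutation value (1-indexed). -/
def ordStat (q1 q0 : ℕ) (x : Fin (q1 + q0) → ℝ) (j : ℕ) : ℝ :=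
  (permVals q1 q0 x).getD (j - 1) 0

/-- Minimum over the treatment block. -/
def bmin (q1 q0 : ℕ) (h : 0 < q1) (x : Fin (q1 + q0) → ℝ) : ℝ :=
  Finset.univ.inf' ⟨⟨0, h⟩, Finset.mem_univ _⟩ fun i : Fin q1 => x (Fin.castAdd q0 i)

/-- Maximum over the control block. -/
def bmax (q1 q0 : ℕ) (h : 0 < q0) (x : Fin (q1 + q0) → ℝ) : ℝ :=
  Finset.univ.sup' ⟨⟨0, h⟩, Finset.mem_univ _⟩ fun i : Fin q0 => x (Fin.natAdd q1 i)

/-- Standard normal CDF. -/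
def stdΦ (x : ℝ) : ℝ := ProbabilityTheory.cdf (gaussianReal 0 1) x

/-- Standard normal quantile function. -/
def stdΦinv : ℝ → ℝ := Function.invFun stdΦ

end

open MeasureTheory ProbabilityTheory Finset
open scoped NNReal

open scoped ENNReal

section AuxProof

noncomputable def sgnv (r : ℝ) (b : Bool) : ℝ := if b then r else -r

lemma sgnv_le (r : ℝ) (hr : 0 ≤ r) (b : Bool) : sgnv r b ≤ r := by
  cases b <;> simp [sgnv] <;> linarith

lemma neg_le_sgnv (r : ℝ) (hr : 0 ≤ r) (b : Bool) : -r ≤ sgnv r b := by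
  cases b <;> simp [sgnv] <;> linarith

lemma card_filter_le_two_pow {n : ℕ} (p : (Fin n → Bool) → Prop) [DecidablePred p] :
    (Finset.univ.filter p).card ≤ 2 ^ n := by
  calc (Finset.univ.filter p).card ≤ (Finset.univ : Finset (Fin n → Bool)).card :=
        Finset.card_filter_le _ _
    _ = 2 ^ n := by simp [Finset.card_univ]

/-- halving: if `Q` does not depend on coordinate `k0`, the set where moreover `s k0 = b`
has half the cardinality. -/
lemma half_card {n : ℕ} (k0 : Fin n) (Q : (Fin n → Bool) → Prop) [DecidablePred Q]
    (hQ : ∀ s b, Q s → Q (Function.update s k0 b)) (b : Bool) :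
    (Finset.univ.filter (fun s => Q s ∧ s k0 = b)).card * 2
      = (Finset.univ.filter Q).card := by
  have hsplit := Finset.card_filter_add_card_filter_not
    (s := Finset.univ.filter Q) (p := fun s => s k0 = b)
  have h1 : (Finset.univ.filter Q).filter (fun s => s k0 = b)
      = Finset.univ.filter (fun s => Q s ∧ s k0 = b) := by
    rw [Finset.filter_filter]
  have h2 : (Finset.univ.filter Q).filter (fun s => ¬ s k0 = b)
      = Finset.univ.filter (fun s => Q s ∧ s k0 = !b) := by
    rw [Finset.filter_filter]
    apply Finset.filter_congr
    intro s _
    constructor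
    · rintro ⟨hq, hne⟩; exact ⟨hq, by cases hsb : s k0 <;> cases b <;> simp_all⟩
    · rintro ⟨hq, hne⟩; exact ⟨hq, by cases b <;> simp_all⟩
  rw [h1, h2] at hsplit
  have hbij : (Finset.univ.filter (fun s => Q s ∧ s k0 = b)).card
      = (Finset.univ.filter (fun s => Q s ∧ s k0 = !b)).card := by
    apply Finset.card_nbij' (i := fun s => Function.update s k0 (!b))
      (j := fun s => Function.update s k0 b)
    · intro s hs
      simp only [Finset.mem_coe, Finset.mem_filter, Finset.mem_univ, true_and] at hs ⊢
      exact ⟨hQ s _ hs.1, by simp⟩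
    · intro s hs
      simp only [Finset.mem_coe, Finset.mem_filter, Finset.mem_univ, true_and] at hs ⊢
      exact ⟨hQ s _ hs.1, by simp⟩
    · intro s hs
      simp only [Finset.mem_coe, Finset.mem_filter, Finset.mem_univ, true_and] at hs
      funext k
      by_cases hk : k = k0
      · subst hk; simp [hs.2]
      · simp [Function.update_of_ne hk]
    · intro s hs
      simp only [Finset.mem_coe, Finset.mem_filter, Finset.mem_univ, true_and] at hs
      funext k
      by_cases hk : k = k0
      · subst hk; simp [hs.2]
      · simp [Function.update_of_ne hk]
  rw [← hbij] at hsplit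
  rw [mul_two]
  exact hsplit

lemma count_feas {n : ℕ} (r : Fin n → ℝ) (hr : ∀ k, 0 ≤ r k) :
    ∀ (m : ℕ) (A B : Finset (Fin n)), Disjoint A B → A.card + B.card ≤ m →
    (Finset.univ.filter (fun s : Fin n → Bool =>
        ∀ i ∈ A, ∀ j ∈ B, sgnv (r j) (s j) < sgnv (r i) (s i))).card
      ≤ 2 ^ (n - min A.card B.card) := by
  intro m
  induction m with
  | zero =>
      intro A B _ hm
      have hA : A.card = 0 := by omega
      have hmin : min A.card B.card = 0 := by omega
      rw [hmin]
      simpa using card_filter_le_two_pow _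
  | succ m ih =>
      intro A B hd hm
      rcases A.eq_empty_or_nonempty with rfl | hA
      · have hmin : min (0:ℕ) B.card = 0 := by simp
        simp only [Finset.card_empty, hmin]
        simpa using card_filter_le_two_pow _
      rcases B.eq_empty_or_nonempty with rfl | hB
      · have hmin : min A.card (0:ℕ) = 0 := by simp
        simp only [Finset.card_empty, hmin]
        simpa using card_filter_le_two_pow _
      have hn : A.card + B.card ≤ n := by
        have := Finset.card_le_card (Finset.subset_univ (A ∪ B))
        rw [Finset.card_union_of_disjoint hd] at this
        simpa using this
      obtain ⟨k0, hk0mem, hk0max⟩ :=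
        Finset.exists_max_image (A ∪ B) r (hA.mono Finset.subset_union_left)
      have hAc : 1 ≤ A.card := Finset.card_pos.mpr hA
      have hBc : 1 ≤ B.card := Finset.card_pos.mpr hB
      rcases Finset.mem_union.mp hk0mem with hk0A | hk0B
      · -- k0 ∈ A : sign forced true
        set Q : (Fin n → Bool) → Prop := fun s =>
          ∀ i ∈ A.erase k0, ∀ j ∈ B, sgnv (r j) (s j) < sgnv (r i) (s i) with hQdef
        have hQindep : ∀ s b, Q s → Q (Function.update s k0 b) := by
          intro s b hq i hi j hj
          have hik : i ≠ k0 := Finset.ne_of_mem_erase hi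
          have hjk : j ≠ k0 := fun h => (Finset.disjoint_left.mp hd hk0A) (h ▸ hj)
          rw [Function.update_of_ne hik, Function.update_of_ne hjk]
          exact hq i hi j hj
        have hsub : (Finset.univ.filter (fun s : Fin n → Bool =>
            ∀ i ∈ A, ∀ j ∈ B, sgnv (r j) (s j) < sgnv (r i) (s i)))
            ⊆ Finset.univ.filter (fun s => Q s ∧ s k0 = true) := by
          intro s hs
          rw [Finset.mem_filter] at hs ⊢
          refine ⟨Finset.mem_univ _, fun i hi j hj => hs.2 i (Finset.mem_of_mem_erase hi) j hj, ?_⟩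
          by_contra hfalse
          obtain ⟨j, hj⟩ := hB
          have h1 := hs.2 k0 hk0A j hj
          have h2 : sgnv (r k0) (s k0) = - r k0 := by
            cases hsk : s k0
            · simp [sgnv]
            · exact absurd hsk hfalse
          have h3 : r j ≤ r k0 := hk0max j (Finset.mem_union_right _ hj)
          have h4 := neg_le_sgnv (r j) (hr j) (s j)
          rw [h2] at h1
          linarith
        have hE : 1 ≤ n - min (A.card - 1) B.card := by omega
        have hpowle : 2 ^ (n - min (A.card - 1) B.card - 1)
            ≤ 2 ^ (n - min A.card B.card) := Nat.pow_le_pow_right (by norm_num) (by omega)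
        have hih : (Finset.univ.filter Q).card ≤ 2 ^ (n - min (A.erase k0).card B.card) := by
          apply ih _ _ (hd.mono_left (Finset.erase_subset _ _))
          rw [Finset.card_erase_of_mem hk0A]; omega
        rw [Finset.card_erase_of_mem hk0A] at hih
        have hcard1 := Finset.card_le_card hsub
        have hhalf := half_card k0 Q hQindep true
        have hle : (Finset.univ.filter (fun s => Q s ∧ s k0 = true)).card
            ≤ 2 ^ (n - min (A.card - 1) B.card - 1) := by
          refine Nat.le_of_mul_le_mul_right ?_ (by norm_num : 0 < 2)
          rw [hhalf]
          refine le_trans hih (le_of_eq ?_)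
          rw [← pow_succ]
          congr 1
          exact (Nat.succ_pred_eq_of_pos hE).symm
        exact le_trans hcard1 (le_trans hle hpowle)
      · -- k0 ∈ B : sign forced false
        set Q : (Fin n → Bool) → Prop := fun s =>
          ∀ i ∈ A, ∀ j ∈ B.erase k0, sgnv (r j) (s j) < sgnv (r i) (s i) with hQdef
        have hQindep : ∀ s b, Q s → Q (Function.update s k0 b) := by
          intro s b hq i hi j hj
          have hjk : j ≠ k0 := Finset.ne_of_mem_erase hj
          have hik : i ≠ k0 := fun h => (Finset.disjoint_right.mp hd hk0B) (h ▸ hi)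
          rw [Function.update_of_ne hik, Function.update_of_ne hjk]
          exact hq i hi j hj
        have hsub : (Finset.univ.filter (fun s : Fin n → Bool =>
            ∀ i ∈ A, ∀ j ∈ B, sgnv (r j) (s j) < sgnv (r i) (s i)))
            ⊆ Finset.univ.filter (fun s => Q s ∧ s k0 = false) := by
          intro s hs
          rw [Finset.mem_filter] at hs ⊢
          refine ⟨Finset.mem_univ _, fun i hi j hj => hs.2 i hi j (Finset.mem_of_mem_erase hj), ?_⟩
          by_contra hfalse
          obtain ⟨i, hi⟩ := hA
          have h1 := hs.2 i hi k0 hk0B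
          have h2 : sgnv (r k0) (s k0) = r k0 := by
            cases hsk : s k0
            · exact absurd hsk hfalse
            · simp [sgnv]
          have h3 : r i ≤ r k0 := hk0max i (Finset.mem_union_left _ hi)
          have h4 := sgnv_le (r i) (hr i) (s i)
          rw [h2] at h1
          linarith
        have hE : 1 ≤ n - min A.card (B.card - 1) := by omega
        have hpowle : 2 ^ (n - min A.card (B.card - 1) - 1)
            ≤ 2 ^ (n - min A.card B.card) := Nat.pow_le_pow_right (by norm_num) (by omega)
        have hih : (Finset.univ.filter Q).card ≤ 2 ^ (n - min A.card (B.erase k0).card) := by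
          apply ih _ _ (hd.mono_right (Finset.erase_subset _ _))
          rw [Finset.card_erase_of_mem hk0B]; omega
        rw [Finset.card_erase_of_mem hk0B] at hih
        have hcard1 := Finset.card_le_card hsub
        have hhalf := half_card k0 Q hQindep false
        have hle : (Finset.univ.filter (fun s => Q s ∧ s k0 = false)).card
            ≤ 2 ^ (n - min A.card (B.card - 1) - 1) := by
          refine Nat.le_of_mul_le_mul_right ?_ (by norm_num : 0 < 2)
          rw [hhalf]
          refine le_trans hih (le_of_eq ?_)
          rw [← pow_succ]
          congr 1
          exact (Nat.succ_pred_eq_of_pos hE).symm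
        exact le_trans hcard1 (le_trans hle hpowle)

def fnat (q1 i j n : ℕ) : ℕ :=
  if n < i then n
  else if n + 1 < q1 then n + 1
  else if n < q1 then j
  else if n = q1 then i
  else if n ≤ j then n - 1
  else n

section gswap
variable {q1 q0 i j : ℕ} (hi : i < q1) (hj1 : q1 ≤ j) (hj2 : j < q1 + q0)
include hi hj1 hj2

lemma fnat_lt (n : ℕ) (hn : n < q1 + q0) : fnat q1 i j n < q1 + q0 := by
  unfold fnat; split_ifs <;> omega

lemma fnat_inj (a b : ℕ) (ha : a < q1 + q0) (hb : b < q1 + q0)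
    (h : fnat q1 i j a = fnat q1 i j b) : a = b := by
  unfold fnat at h; split_ifs at h <;> omega

lemma fnat_mono (a b : ℕ) (hb : b < q1 + q0) (hab : a < b) (hblock : b < q1 ∨ q1 ≤ a) :
    fnat q1 i j a < fnat q1 i j b := by
  unfold fnat; split_ifs <;> omega

noncomputable def gswap : Equiv.Perm (Fin (q1 + q0)) :=
  Equiv.ofBijective (fun k => ⟨fnat q1 i j k.val, fnat_lt hi hj1 hj2 k.val k.isLt⟩)
    (Finite.injective_iff_bijective.mp (fun a b hab => by
      apply Fin.ext
      exact fnat_inj hi hj1 hj2 a.val b.val a.isLt b.isLt (by simpa [Fin.ext_iff] using hab)))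

lemma gswap_val (k : Fin (q1 + q0)) : (gswap hi hj1 hj2 k : ℕ) = fnat q1 i j k.val := rfl

lemma gswap_ne_one : gswap hi hj1 hj2 ≠ 1 := by
  intro h
  have h2 : (gswap hi hj1 hj2 ⟨q1, by omega⟩ : ℕ) = q1 := by rw [h]; rfl
  rw [gswap_val] at h2
  simp only [Fin.val_mk] at h2
  unfold fnat at h2
  split_ifs at h2 <;> omega

end gswap

section gswap2
variable {q1 q0 i j : ℕ} (hi : i < q1) (hj1 : q1 ≤ j) (hj2 : j < q1 + q0)
include hi hj1 hj2

lemma gswap_mem_permSet : gswap hi hj1 hj2 ∈ permSet q1 q0 := by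
  rw [permSet, Finset.mem_filter]
  refine ⟨Finset.mem_univ _, fun a b hab hblock => ?_⟩
  rw [Fin.lt_def] at hab ⊢
  rw [gswap_val, gswap_val]
  exact fnat_mono hi hj1 hj2 a.val b.val b.isLt hab hblock

lemma gswap_image (x : Fin (q1 + q0) → ℝ) :
    (Finset.univ.filter (fun k : Fin (q1+q0) => (k:ℕ) < q1)).image (gswap hi hj1 hj2)
      = insert (⟨j, hj2⟩ : Fin (q1+q0))
          ((Finset.univ.filter (fun k : Fin (q1+q0) => (k:ℕ) < q1)).erase ⟨i, by omega⟩) := by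
  ext a
  simp only [Finset.mem_image, Finset.mem_insert, Finset.mem_erase, Finset.mem_filter,
    Finset.mem_univ, true_and]
  constructor
  · rintro ⟨k, hk, rfl⟩
    simp only [Fin.ext_iff, gswap_val, Fin.val_mk, ne_eq]
    unfold fnat
    split_ifs <;> omega
  · rintro (rfl | ⟨hne, hlt⟩)
    · refine ⟨⟨q1 - 1, by omega⟩, by simp; omega, ?_⟩
      apply Fin.ext
      simp only [gswap_val, Fin.val_mk]
      unfold fnat
      split_ifs <;> omega
    · rw [Fin.ne_iff_vne] at hne
      simp only [Fin.val_mk] at hne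
      by_cases hai : (a:ℕ) < i
      · refine ⟨a, hlt, ?_⟩
        apply Fin.ext
        simp only [gswap_val]
        unfold fnat
        split_ifs <;> omega
      · refine ⟨⟨(a:ℕ) - 1, by omega⟩, by simp; omega, ?_⟩
        apply Fin.ext
        simp only [gswap_val, Fin.val_mk]
        unfold fnat
        split_ifs <;> omega

lemma gswap_sum (x : Fin (q1 + q0) → ℝ) :
    (∑ k : Fin (q1+q0), if (k:ℕ) < q1 then x (gswap hi hj1 hj2 k) else 0)
      = (∑ k : Fin (q1+q0), if (k:ℕ) < q1 then x k else 0)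
        - x ⟨i, by omega⟩ + x ⟨j, hj2⟩ := by
  have h1 : (∑ k : Fin (q1+q0), if (k:ℕ) < q1 then x (gswap hi hj1 hj2 k) else 0)
      = ∑ k ∈ Finset.univ.filter (fun k : Fin (q1+q0) => (k:ℕ) < q1),
          x (gswap hi hj1 hj2 k) := (Finset.sum_filter _ _).symm
  have h2 : ∑ k ∈ Finset.univ.filter (fun k : Fin (q1+q0) => (k:ℕ) < q1),
        x (gswap hi hj1 hj2 k)
      = ∑ a ∈ (Finset.univ.filter (fun k : Fin (q1+q0) => (k:ℕ) < q1)).image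
          (gswap hi hj1 hj2), x a :=
    (Finset.sum_image (fun a _ b _ h => (gswap hi hj1 hj2).injective h)).symm
  rw [h1, h2, gswap_image hi hj1 hj2 x]
  have hjnot : (⟨j, hj2⟩ : Fin (q1+q0)) ∉
      (Finset.univ.filter (fun k : Fin (q1+q0) => (k:ℕ) < q1)).erase ⟨i, by omega⟩ := by
    simp; omega
  rw [Finset.sum_insert hjnot,
    Finset.sum_erase_eq_sub (by simp [hi] : (⟨i, by omega⟩ : Fin (q1+q0)) ∈ _)]
  rw [← Finset.sum_filter]
  ring

lemma sum_block0_eq (y : Fin (q1 + q0) → ℝ) :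
    (∑ k : Fin (q1+q0), if q1 ≤ (k:ℕ) then y k else 0)
      = (∑ k, y k) - ∑ k : Fin (q1+q0), if (k:ℕ) < q1 then y k else 0 := by
  rw [← Finset.sum_sub_distrib]
  apply Finset.sum_congr rfl
  intro k _
  by_cases h : (k:ℕ) < q1
  · rw [if_neg (by omega), if_pos h]; ring
  · rw [if_pos (by omega), if_neg h]; ring

lemma tstat_mono (x : Fin (q1 + q0) → ℝ) (hxij : x ⟨i, by omega⟩ ≤ x ⟨j, hj2⟩) :
    Tstat q1 q0 x ≤ Tstat q1 q0 (fun k => x (gswap hi hj1 hj2 k)) := by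
  have hq1 : (0:ℝ) < q1 := by exact_mod_cast (by omega : 0 < q1)
  have hq0 : (0:ℝ) < q0 := by exact_mod_cast (by omega : 0 < q0)
  unfold Tstat
  rw [sum_block0_eq hi hj1 hj2 x, sum_block0_eq hi hj1 hj2 (fun k => x (gswap hi hj1 hj2 k)),
    gswap_sum hi hj1 hj2 x, Equiv.sum_comp (gswap hi hj1 hj2) x]
  set A1 := ∑ k : Fin (q1+q0), if (k:ℕ) < q1 then x k else 0 with hA1
  set tot := ∑ k, x k with htot
  have hdelta : (0:ℝ) ≤ x ⟨j, hj2⟩ - x ⟨i, by omega⟩ := by linarith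
  rw [div_eq_mul_inv, div_eq_mul_inv, div_eq_mul_inv, div_eq_mul_inv]
  have hi1 : (0:ℝ) ≤ ((q1:ℝ))⁻¹ := by positivity
  have hi0 : (0:ℝ) ≤ ((q0:ℝ))⁻¹ := by positivity
  exact sub_le_sub (mul_le_mul_of_nonneg_right (by linarith) hi1)
    (mul_le_mul_of_nonneg_right (by linarith) hi0)

end gswap2

lemma ordStat_ge {q1 q0 : ℕ} (x : Fin (q1+q0) → ℝ) (t : ℝ)
    (g g' : Equiv.Perm (Fin (q1+q0))) (hg : g ∈ permSet q1 q0) (hg' : g' ∈ permSet q1 q0)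
    (hne : g ≠ g') (ht : t ≤ Tstat q1 q0 (fun k => x (g k)))
    (ht' : t ≤ Tstat q1 q0 (fun k => x (g' k))) :
    t ≤ ordStat q1 q0 x ((permSet q1 q0).card - 1) := by
  classical
  set l := permVals q1 q0 x with hl
  set N := (permSet q1 q0).card with hN
  have hlen : l.length = N := by
    rw [hl, permVals, Multiset.length_sort, Multiset.card_map]
    rfl
  set p : ℝ → Bool := fun v => decide (t ≤ v) with hp
  have hcount : 2 ≤ l.countP p := by
    have h1 : l.countP p = Multiset.countP (fun v => t ≤ v) (↑l) := by
      rw [Multiset.coe_countP]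
    rw [h1, hl, permVals, Multiset.sort_eq, Multiset.countP_map]
    have hsub : ({g, g'} : Finset (Equiv.Perm (Fin (q1+q0))))
        ⊆ (permSet q1 q0).filter (fun g => t ≤ Tstat q1 q0 fun k => x (g k)) := by
      intro a ha
      rcases Finset.mem_insert.mp ha with rfl | ha
      · exact Finset.mem_filter.mpr ⟨hg, ht⟩
      · rw [Finset.mem_singleton] at ha; subst ha
        exact Finset.mem_filter.mpr ⟨hg', ht'⟩
    have hcard2 := Finset.card_le_card hsub
    rw [Finset.card_insert_of_notMem (by simpa using hne), Finset.card_singleton] at hcard2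
    exact le_trans hcard2 (le_of_eq rfl)
  have hN2 : 2 ≤ N := by
    have := List.countP_le_length (l := l) (p := p)
    omega
  -- now suppose the (N-1)-th smallest (0-indexed N-2) is < t
  by_contra hcon
  push_neg at hcon
  rw [ordStat] at hcon
  have hidx : N - 1 - 1 < l.length := by omega
  rw [List.getD_eq_getElem l 0 hidx] at hcon
  have hsorted : l.Pairwise (· ≤ ·) := by
    rw [hl, permVals]; exact Multiset.pairwise_sort _ _
  -- every element of the first N-1 entries is < t
  have htake : ∀ a ∈ l.take (N-1), p a = false := by
    intro a ha
    obtain ⟨idx, hidxlt, rfl⟩ := List.mem_iff_getElem.mp ha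
    rw [List.length_take] at hidxlt
    have hidx2 : idx < l.length := by omega
    rw [List.getElem_take] at *
    have hle : l[idx] ≤ l[N-1-1] := by
      have := List.Pairwise.rel_get_of_le hsorted
        (a := ⟨idx, hidx2⟩) (b := ⟨N-1-1, hidx⟩) (by simp [Fin.le_def]; omega)
      simpa [List.get_eq_getElem] using this
    simp only [hp, decide_eq_false_iff_not, not_le]
    calc l[idx] ≤ l[N-1-1] := hle
      _ < t := hcon
  have hsplit : l.countP p = (l.take (N-1)).countP p + (l.drop (N-1)).countP p := by
    rw [← List.countP_append, List.take_append_drop]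
  have h0 : (l.take (N-1)).countP p = 0 := by
    rw [List.countP_eq_zero]
    intro a ha
    simp [htake a ha]
  have h1 : (l.drop (N-1)).countP p ≤ 1 := by
    calc (l.drop (N-1)).countP p ≤ (l.drop (N-1)).length := List.countP_le_length
      _ = l.length - (N-1) := List.length_drop
      _ ≤ 1 := by omega
  omega


lemma measurableSet_G (q1 q0 : ℕ) :
    MeasurableSet {x : Fin (q1+q0) → ℝ |
      ∀ i j : Fin (q1+q0), (i:ℕ) < q1 → q1 ≤ (j:ℕ) → x j < x i} := by
  have hGeq : {x : Fin (q1+q0) → ℝ |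
        ∀ i j : Fin (q1+q0), (i:ℕ) < q1 → q1 ≤ (j:ℕ) → x j < x i}
      = ⋂ (i : Fin (q1+q0)) (j : Fin (q1+q0)),
        {x : Fin (q1+q0) → ℝ | (i:ℕ) < q1 → q1 ≤ (j:ℕ) → x j < x i} := by
    ext x; simp only [Set.mem_setOf_eq, Set.mem_iInter]
  rw [hGeq]
  refine MeasurableSet.iInter fun i => MeasurableSet.iInter fun j => ?_
  by_cases hi : (i:ℕ) < q1
  · by_cases hj : q1 ≤ (j:ℕ)
    · have h : {x : Fin (q1+q0) → ℝ | (i:ℕ) < q1 → q1 ≤ (j:ℕ) → x j < x i}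
          = {x : Fin (q1+q0) → ℝ | x j < x i} := by
        ext x; simp [hi, hj]
      rw [h]
      exact measurableSet_lt (measurable_pi_apply j) (measurable_pi_apply i)
    · have h : {x : Fin (q1+q0) → ℝ | (i:ℕ) < q1 → q1 ≤ (j:ℕ) → x j < x i} = Set.univ := by
        ext x; simp [hj]
      rw [h]; exact MeasurableSet.univ
  · have h : {x : Fin (q1+q0) → ℝ | (i:ℕ) < q1 → q1 ≤ (j:ℕ) → x j < x i} = Set.univ := by
      ext x; simp [hi]
    rw [h]; exact MeasurableSet.univ

lemma gaussian_symm (μ : ℝ) (v : ℝ≥0) :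
    Measure.map (fun x => 2*μ - x) (gaussianReal μ v) = gaussianReal μ v := by
  have h1 : (fun x : ℝ => 2*μ - x) = (fun x => x + 2*μ) ∘ (fun x => (-1) * x) := by
    funext x; simp; ring
  rw [h1, ← Measure.map_map (by fun_prop) (by fun_prop)]
  rw [gaussianReal_map_const_mul (-1)]
  have h2 : NNReal.mk ((-1:ℝ)^2) (sq_nonneg _) = 1 := by
    ext
    norm_num
  rw [h2, one_mul, gaussianReal_map_add_const]
  congr 1
  ring

section CardBlocks
variable (q1 q0 : ℕ)

lemma cardA : (Finset.univ.filter (fun k : Fin (q1+q0) => (k:ℕ) < q1)).card = q1 := by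
  have h : Finset.univ.filter (fun k : Fin (q1+q0) => (k:ℕ) < q1)
      = (Finset.univ : Finset (Fin q1)).image (Fin.castAdd q0) := by
    ext a
    simp only [Finset.mem_filter, Finset.mem_univ, true_and, Finset.mem_image]
    constructor
    · intro ha; exact ⟨⟨a.val, ha⟩, by apply Fin.ext; simp⟩
    · rintro ⟨b, rfl⟩; simpa using b.isLt
  rw [h, Finset.card_image_of_injective _ (Fin.castAdd_injective _ _), Finset.card_univ,
    Fintype.card_fin]

lemma cardB : (Finset.univ.filter (fun k : Fin (q1+q0) => q1 ≤ (k:ℕ))).card = q0 := by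
  have h : Finset.univ.filter (fun k : Fin (q1+q0) => q1 ≤ (k:ℕ))
      = (Finset.univ : Finset (Fin q0)).image (Fin.natAdd q1) := by
    ext a
    simp only [Finset.mem_filter, Finset.mem_univ, true_and, Finset.mem_image]
    constructor
    · intro ha
      refine ⟨⟨a.val - q1, by omega⟩, ?_⟩
      apply Fin.ext; simp; omega
    · rintro ⟨b, rfl⟩; simp
  rw [h, Finset.card_image_of_injective _ (fun a b h => by
      simpa [Fin.ext_iff] using h), Finset.card_univ,
    Fintype.card_fin]

lemma disjAB : Disjoint (Finset.univ.filter (fun k : Fin (q1+q0) => (k:ℕ) < q1))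
    (Finset.univ.filter (fun k : Fin (q1+q0) => q1 ≤ (k:ℕ))) := by
  rw [Finset.disjoint_left]
  intro a ha hb
  rw [Finset.mem_filter] at ha hb
  omega

end CardBlocks

theorem pi_bound (q1 q0 : ℕ) (hq1 : 0 < q1) (hq0 : 0 < q0) (μ : ℝ)
    (ν : Fin (q1+q0) → Measure ℝ) [hprob : ∀ k, IsProbabilityMeasure (ν k)]
    (hsymm : ∀ k, Measure.map (fun x => 2*μ - x) (ν k) = ν k) :
    Measure.pi ν {x | ∀ i j : Fin (q1+q0), (i:ℕ) < q1 → q1 ≤ (j:ℕ) → x j < x i}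
      ≤ 2⁻¹ ^ (min q1 q0) := by
  classical
  haveI : ∀ k, SigmaFinite (ν k) := fun k => inferInstance
  set G : Set (Fin (q1+q0) → ℝ) :=
    {x | ∀ i j : Fin (q1+q0), (i:ℕ) < q1 → q1 ≤ (j:ℕ) → x j < x i} with hG
  have hGm : MeasurableSet G := by
    have hGeq : G = ⋂ (i : Fin (q1+q0)) (j : Fin (q1+q0)),
        {x : Fin (q1+q0) → ℝ | (i:ℕ) < q1 → q1 ≤ (j:ℕ) → x j < x i} := by
      ext x; simp only [hG, Set.mem_setOf_eq, Set.mem_iInter]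
    rw [hGeq]
    refine MeasurableSet.iInter fun i => MeasurableSet.iInter fun j => ?_
    by_cases hi : (i:ℕ) < q1
    · by_cases hj : q1 ≤ (j:ℕ)
      · have : {x : Fin (q1+q0) → ℝ | (i:ℕ) < q1 → q1 ≤ (j:ℕ) → x j < x i}
            = {x : Fin (q1+q0) → ℝ | x j < x i} := by
          ext x; simp [hi, hj]
        rw [this]
        exact measurableSet_lt (measurable_pi_apply j) (measurable_pi_apply i)
      · have : {x : Fin (q1+q0) → ℝ | (i:ℕ) < q1 → q1 ≤ (j:ℕ) → x j < x i} = Set.univ := by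
          ext x; simp [hj]
        rw [this]; exact MeasurableSet.univ
    · have : {x : Fin (q1+q0) → ℝ | (i:ℕ) < q1 → q1 ≤ (j:ℕ) → x j < x i} = Set.univ := by
        ext x; simp [hi]
      rw [this]; exact MeasurableSet.univ
  set φ : (Fin (q1+q0) → Bool) → (Fin (q1+q0) → ℝ) → (Fin (q1+q0) → ℝ) :=
    fun s x k => if s k then x k else 2*μ - x k with hφ
  have hφm : ∀ s, Measurable (φ s) := by
    intro s
    apply measurable_pi_lambda
    intro k
    by_cases h : s k
    · simpa [hφ, h] using measurable_pi_apply k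
    · simp only [hφ, h, if_false]
      exact measurable_const.sub (measurable_pi_apply k)
  have hmap : ∀ s, Measure.map (φ s) (Measure.pi ν) = Measure.pi ν := by
    intro s
    refine (Measure.pi_eq fun t ht => ?_).symm
    rw [Measure.map_apply (hφm s) (MeasurableSet.univ_pi ht)]
    have hpre : φ s ⁻¹' (Set.pi Set.univ t)
        = Set.pi Set.univ (fun k => if s k then t k else (fun y => 2*μ - y) ⁻¹' t k) := by
      ext x
      simp only [Set.mem_preimage, Set.mem_pi, Set.mem_univ, true_implies, hφ]
      refine forall_congr' fun k => ?_
      by_cases h : s k <;> simp [h]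
    rw [hpre, Measure.pi_pi]
    refine Finset.prod_congr rfl fun k _ => ?_
    by_cases h : s k
    · simp [h]
    · rw [if_neg h]
      conv_rhs => rw [← hsymm k]
      rw [Measure.map_apply (by fun_prop) (ht k)]
  -- counting
  have hcount : ∀ x : Fin (q1+q0) → ℝ,
      (Finset.univ.filter (fun s : Fin (q1+q0) → Bool => x ∈ φ s ⁻¹' G)).card ≤ 2 ^ ((q1+q0) - min q1 q0) := by
    intro x
    set r : Fin (q1+q0) → ℝ := fun k => |x k - μ| with hr
    set mask : Fin (q1+q0) → Bool := fun k => decide (μ ≤ x k) with hmask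
    have hkey : ∀ (s : Fin (q1+q0) → Bool) (k : Fin (q1+q0)),
        φ s x k - μ = sgnv (r k) (s k == mask k) := by
      intro s k
      have habs1 : μ ≤ x k → r k = x k - μ := fun h => abs_of_nonneg (by linarith)
      have habs2 : ¬ μ ≤ x k → r k = μ - x k := fun h => by
        show |x k - μ| = μ - x k
        rw [abs_of_neg (by push_neg at h; linarith)]
        ring
      by_cases hs : s k <;> by_cases hmk : μ ≤ x k
      · rw [habs1 hmk]; simp [hφ, sgnv, hmask, hs, hmk]
      · rw [habs2 hmk]; simp [hφ, sgnv, hmask, hs, hmk]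
      · rw [habs1 hmk]; simp [hφ, sgnv, hmask, hs, hmk]; ring
      · rw [habs2 hmk]; simp [hφ, sgnv, hmask, hs, hmk]; ring
    have hAc : (Finset.univ.filter (fun k : Fin (q1+q0) => (k:ℕ) < q1)).card = q1 := cardA q1 q0
    have hBc : (Finset.univ.filter (fun k : Fin (q1+q0) => q1 ≤ (k:ℕ))).card = q0 := cardB q1 q0
    have hmain := count_feas r (fun k => abs_nonneg _) (q1 + q0)
      (Finset.univ.filter (fun k : Fin (q1+q0) => (k:ℕ) < q1))
      (Finset.univ.filter (fun k : Fin (q1+q0) => q1 ≤ (k:ℕ)))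
      (disjAB q1 q0) (by rw [hAc, hBc])
    rw [hAc, hBc] at hmain
    refine le_trans (Finset.card_le_card_of_injOn
      (fun s => fun k => s k == mask k) ?_ ?_) hmain
    · intro s hs
      rw [Finset.mem_coe, Finset.mem_filter] at hs ⊢
      refine ⟨Finset.mem_univ _, ?_⟩
      intro i hi j hj
      rw [Finset.mem_filter] at hi hj
      have hsG : φ s x ∈ G := hs.2
      have h2 : φ s x j < φ s x i := hsG i j hi.2 hj.2
      have h3 : φ s x j - μ < φ s x i - μ := by linarith
      rw [hkey s i, hkey s j] at h3
      exact h3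
    · intro s _ s' _ hss
      funext k
      have := congrFun hss k
      cases hsk : s k <;> cases hsk' : s' k <;> cases hmk : mask k <;> simp_all
  -- summation over sign flips
  have hGs_meas : ∀ s : Fin (q1+q0) → Bool, MeasurableSet (φ s ⁻¹' G) :=
    fun s => (hφm s) hGm
  have hν_each : ∀ s : Fin (q1+q0) → Bool, Measure.pi ν (φ s ⁻¹' G) = Measure.pi ν G := by
    intro s
    rw [← Measure.map_apply (hφm s) hGm, hmap s]
  have hsum_eq : ∑ s : Fin (q1+q0) → Bool, Measure.pi ν (φ s ⁻¹' G)
      = (2:ℝ≥0∞) ^ (q1+q0) * Measure.pi ν G := by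
    rw [Finset.sum_congr rfl (fun s _ => hν_each s), Finset.sum_const, Finset.card_univ]
    have hcardfun : Fintype.card (Fin (q1+q0) → Bool) = 2 ^ (q1+q0) := by
      simp
    rw [hcardfun, nsmul_eq_mul]
    push_cast
    ring
  have hsum_le : ∑ s : Fin (q1+q0) → Bool, Measure.pi ν (φ s ⁻¹' G)
      ≤ (2:ℝ≥0∞) ^ ((q1+q0) - min q1 q0) := by
    have h1 : ∀ s : Fin (q1+q0) → Bool, Measure.pi ν (φ s ⁻¹' G)
        = ∫⁻ x, (φ s ⁻¹' G).indicator (fun _ => (1:ℝ≥0∞)) x ∂(Measure.pi ν) := by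
      intro s
      rw [lintegral_indicator (hGs_meas s)]
      simp
    rw [Finset.sum_congr rfl fun s _ => h1 s,
      ← lintegral_finset_sum _ (fun s _ => (measurable_const.indicator (hGs_meas s)))]
    have h2 : ∀ x, (∑ s : Fin (q1+q0) → Bool,
          (φ s ⁻¹' G).indicator (fun _ => (1:ℝ≥0∞)) x)
        ≤ (2:ℝ≥0∞) ^ ((q1+q0) - min q1 q0) := by
      intro x
      have h3 : (∑ s : Fin (q1+q0) → Bool, (φ s ⁻¹' G).indicator (fun _ => (1:ℝ≥0∞)) x)
          = ((Finset.univ.filter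
              (fun s : Fin (q1+q0) → Bool => x ∈ φ s ⁻¹' G)).card : ℝ≥0∞) := by
        rw [Finset.card_filter]
        push_cast
        apply Finset.sum_congr rfl
        intro s _
        by_cases h : x ∈ φ s ⁻¹' G <;> simp [Set.indicator_apply, h]
      rw [h3]
      calc ((Finset.univ.filter (fun s : Fin (q1+q0) → Bool => x ∈ φ s ⁻¹' G)).card : ℝ≥0∞)
          ≤ ((2 ^ ((q1+q0) - min q1 q0) : ℕ) : ℝ≥0∞) := Nat.cast_le.mpr (hcount x)
        _ = (2:ℝ≥0∞) ^ ((q1+q0) - min q1 q0) := by push_cast; ring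
    calc (∫⁻ x, (∑ s : Fin (q1+q0) → Bool,
            (φ s ⁻¹' G).indicator (fun _ => (1:ℝ≥0∞)) x) ∂(Measure.pi ν))
        ≤ ∫⁻ _, (2:ℝ≥0∞) ^ ((q1+q0) - min q1 q0) ∂(Measure.pi ν) := lintegral_mono h2
      _ = (2:ℝ≥0∞) ^ ((q1+q0) - min q1 q0) := by
          rw [lintegral_const]
          simp
  have hfinal : (2:ℝ≥0∞) ^ (q1+q0) * Measure.pi ν G ≤ 2 ^ ((q1+q0) - min q1 q0) := by
    rw [← hsum_eq]; exact hsum_le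
  have h2ne : ((2:ℝ≥0∞) ^ (q1+q0)) ≠ 0 := pow_ne_zero _ (by norm_num)
  have h2top : ((2:ℝ≥0∞) ^ (q1+q0)) ≠ ⊤ := ENNReal.pow_ne_top (by norm_num)
  calc Measure.pi ν G
      = ((2:ℝ≥0∞)^(q1+q0))⁻¹ * (2^(q1+q0) * Measure.pi ν G) := by
        rw [← mul_assoc, ENNReal.inv_mul_cancel h2ne h2top, one_mul]
    _ ≤ ((2:ℝ≥0∞)^(q1+q0))⁻¹ * 2^((q1+q0) - min q1 q0) := mul_le_mul_right hfinal _
    _ = 2⁻¹ ^ (min q1 q0) := by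
        set d := (q1+q0) - min q1 q0 with hdd
        have hd : d + min q1 q0 = q1 + q0 := by
          have : min q1 q0 ≤ q1 := min_le_left _ _
          omega
        rw [← hd, pow_add,
          ENNReal.mul_inv (Or.inl (pow_ne_zero _ (by norm_num)))
            (Or.inl (ENNReal.pow_ne_top (by norm_num))),
          mul_comm (((2:ℝ≥0∞)^d)⁻¹) _, mul_assoc,
          ENNReal.inv_mul_cancel (pow_ne_zero _ (by norm_num))
            (ENNReal.pow_ne_top (by norm_num)), mul_one, ENNReal.inv_pow]


lemma joint_law {Ω : Type*} [MeasurableSpace Ω] (P : Measure Ω) [IsProbabilityMeasure P]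
    {n : ℕ} (ν : Fin n → Measure ℝ) [∀ k, IsProbabilityMeasure (ν k)]
    (X : Fin n → Ω → ℝ) (hXm : ∀ k, Measurable (X k))
    (hind : iIndepFun X P)
    (hdist : ∀ k, Measure.map (X k) P = ν k) :
    Measure.pi ν = Measure.map (fun ω k => X k ω) P := by
  refine Measure.pi_eq fun s hs => ?_
  rw [Measure.map_apply (measurable_pi_lambda _ hXm) (MeasurableSet.univ_pi hs)]
  have hpre : (fun ω k => X k ω) ⁻¹' (Set.pi Set.univ s) = ⋂ k ∈ Finset.univ, X k ⁻¹' s k := by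
    ext ω; simp [Set.mem_pi]
  rw [hpre, hind.measure_inter_preimage_eq_mul Finset.univ (fun i _ => hs i)]
  exact Finset.prod_congr rfl fun k _ => by rw [← hdist k, Measure.map_apply (hXm k) (hs k)]

lemma one_mem_permSet (q1 q0 : ℕ) : (1 : Equiv.Perm (Fin (q1+q0))) ∈ permSet q1 q0 :=
  Finset.mem_filter.mpr ⟨Finset.mem_univ _, fun i j hij _ => by simpa using hij⟩

lemma event_incl (q1 q0 : ℕ) (x : Fin (q1+q0) → ℝ)
    (hev : ordStat q1 q0 x ((permSet q1 q0).card - 1) < Tstat q1 q0 x) :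
    ∀ i j : Fin (q1+q0), (i:ℕ) < q1 → q1 ≤ (j:ℕ) → x j < x i := by
  intro i j hi hj
  by_contra hcon
  push_neg at hcon
  have hixi : x ⟨(i:ℕ), by omega⟩ ≤ x ⟨(j:ℕ), j.isLt⟩ := by
    simpa [Fin.eta] using hcon
  have hmono := tstat_mono hi hj j.isLt x hixi
  have hge := ordStat_ge x (Tstat q1 q0 x) (gswap hi hj j.isLt) 1
    (gswap_mem_permSet hi hj j.isLt) (one_mem_permSet q1 q0)
    (gswap_ne_one hi hj j.isLt) hmono (by simp)
  exact absurd hev (not_lt.mpr hge)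

end AuxProof

/-- if the worst-case bound `B(q1,q0)` is at most α, the test using the
second-largest permutation value as critical value has level α; and if `q1 ∧ q0 ≥ 5`
then `B(q1,q0) < 0.05`. -/
theorem adjusted_permutation_test_level
    {Ω : Type*} [MeasurableSpace Ω] (P : Measure Ω) [IsProbabilityMeasure P]
    (q1 q0 : ℕ) (hq1 : 4 ≤ q1) (hq0 : 4 ≤ q0) (α : ℝ) (hα : α ∈ Set.Ioo (0 : ℝ) 1)
    (μ : ℝ) (σ : Fin (q1 + q0) → ℝ≥0) (hσ : ∀ k, 0 < σ k)
    (X : Fin (q1 + q0) → Ω → ℝ) (hXm : ∀ k, Measurable (X k))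
    (hind : iIndepFun X P)
    (hdist : ∀ k, Measure.map (X k) P = gaussianReal μ (σ k ^ 2)) :
    (((1 / 2 : ℝ) ^ (min q1 q0) + (1 / 2 : ℝ) ^ (max q1 q0 + 1) - (1 / 2 : ℝ) ^ (q1 + q0))
          ≤ α →
        P {ω | ordStat q1 q0 (fun k => X k ω) ((permSet q1 q0).card - 1)
              < Tstat q1 q0 (fun k => X k ω)}
          ≤ ENNReal.ofReal α)
      ∧ (5 ≤ min q1 q0 →
          ((1 / 2 : ℝ) ^ (min q1 q0) + (1 / 2 : ℝ) ^ (max q1 q0 + 1)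
              - (1 / 2 : ℝ) ^ (q1 + q0)) < 0.05) := by
  constructor
  · -- the main level bound
    intro hBα
    obtain ⟨hα0, hα1⟩ := hα
    set ν : Fin (q1+q0) → Measure ℝ := fun k => gaussianReal μ (σ k ^ 2) with hν
    haveI : ∀ k, IsProbabilityMeasure (ν k) := fun k => by
      rw [hν]; infer_instance
    set G : Set (Fin (q1+q0) → ℝ) :=
      {x | ∀ i j : Fin (q1+q0), (i:ℕ) < q1 → q1 ≤ (j:ℕ) → x j < x i} with hG
    have hGm : MeasurableSet G := measurableSet_G q1 q0
    have hsub : {ω | ordStat q1 q0 (fun k => X k ω) ((permSet q1 q0).card - 1)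
          < Tstat q1 q0 (fun k => X k ω)}
        ⊆ (fun ω (k : Fin (q1+q0)) => X k ω) ⁻¹' G := by
      intro ω hω
      exact event_incl q1 q0 _ hω
    have hmeasX : Measurable (fun ω (k : Fin (q1+q0)) => X k ω) :=
      measurable_pi_lambda _ hXm
    have hjoint := joint_law P ν X hXm hind hdist
    have h2 : P ((fun ω (k : Fin (q1+q0)) => X k ω) ⁻¹' G) = Measure.pi ν G := by
      rw [← Measure.map_apply hmeasX hGm, ← hjoint]
    have h3 : Measure.pi ν G ≤ 2⁻¹ ^ (min q1 q0) :=
      pi_bound q1 q0 (by omega) (by omega) μ ν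
        (fun k => gaussian_symm μ (σ k ^ 2))
    have hreal : (1/2:ℝ) ^ (min q1 q0) ≤ α := by
      have hmm : min q1 q0 + max q1 q0 = q1 + q0 := min_add_max q1 q0
      have hle : max q1 q0 + 1 ≤ q1 + q0 := by omega
      have hpow : (1/2:ℝ) ^ (q1+q0) ≤ (1/2:ℝ) ^ (max q1 q0 + 1) :=
        pow_le_pow_of_le_one (by norm_num) (by norm_num) hle
      linarith
    have h4 : (2⁻¹ : ℝ≥0∞) ^ (min q1 q0) ≤ ENNReal.ofReal α := by
      have he : (2⁻¹ : ℝ≥0∞) ^ (min q1 q0) = ENNReal.ofReal ((1/2:ℝ) ^ (min q1 q0)) := by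
        rw [ENNReal.ofReal_pow (by norm_num)]
        congr 1
        rw [show (1/2:ℝ) = 2⁻¹ by norm_num, ENNReal.ofReal_inv_of_pos (by norm_num)]
        congr 1
        norm_num
      rw [he]
      exact ENNReal.ofReal_le_ofReal hreal
    calc P {ω | ordStat q1 q0 (fun k => X k ω) ((permSet q1 q0).card - 1)
          < Tstat q1 q0 (fun k => X k ω)}
        ≤ P ((fun ω (k : Fin (q1+q0)) => X k ω) ⁻¹' G) := measure_mono hsub
      _ = Measure.pi ν G := h2
      _ ≤ 2⁻¹ ^ (min q1 q0) := h3
      _ ≤ ENNReal.ofReal α := h4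
  · -- numeric bound
    intro h5
    have hmax5 : 5 ≤ max q1 q0 := le_trans h5 (min_le_max)
    have h1 : (1/2:ℝ) ^ (min q1 q0) ≤ (1/2:ℝ) ^ 5 :=
      pow_le_pow_of_le_one (by norm_num) (by norm_num) h5
    have h2 : (1/2:ℝ) ^ (max q1 q0 + 1) ≤ (1/2:ℝ) ^ 6 :=
      pow_le_pow_of_le_one (by norm_num) (by norm_num) (by omega)
    have h3 : (0:ℝ) < (1/2:ℝ) ^ (q1+q0) := by positivity
    have e1 : ((1:ℝ)/2) ^ (5:ℕ) = 1/32 := by norm_num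
    have e2 : ((1:ℝ)/2) ^ (6:ℕ) = 1/64 := by norm_num
    rw [show (0.05:ℝ) = 1/20 by norm_num]
    linarith
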